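/- If L = (l_{ij}) is a minimal feasible list of order n, then l_{ij} ≤ C(n,2) + 1 for each pair i, j ∈ [n]. -/

import Mathlib

open Finset

/-- Two permutations are adjacent if every element's position changes by at most one. -/
def Adjacent {n : ℕ} (π σ : Equiv.Perm (Fin n)) : Prop :=
  ∀ i, ((π i : ℤ) - (σ i : ℤ)).natAbs ≤ 1

/-- Number of times wires `i` and `j` swap in the sequence `T` of height `h`. -/
def SwapCount {n : ℕ} (T : ℕ → Equiv.Perm (Fin n)) (h : ℕ) (i j : Fin n) : ℕ :=
  ((Finset.range (h - 1)).filter fun t => T t i = T (t+1) j ∧ T t j = T (t+1) i).card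

/-- A tangle of height `h`: a nonempty sequence of permutations with consecutive ones adjacent. -/
def IsTangle {n : ℕ} (T : ℕ → Equiv.Perm (Fin n)) (h : ℕ) : Prop :=
  1 ≤ h ∧ ∀ t, t + 1 < h → Adjacent (T t) (T (t+1))

/-- A tangle starting at the identity realizing the list `l`. -/
def Realizes {n : ℕ} (T : ℕ → Equiv.Perm (Fin n)) (h : ℕ) (l : Fin n → Fin n → ℕ) : Prop :=
  IsTangle T h ∧ T 0 = 1 ∧ ∀ i j, i ≠ j → SwapCount T h i j = l i j

/-- A list is feasible if some tangle starting at the identity realizes it. -/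
def Feasible {n : ℕ} (l : Fin n → Fin n → ℕ) : Prop :=
  ∃ h T, Realizes T h l

/-- A list is consistent if the map `id_n L` is a permutation of `[n]`. -/
def Consistent {n : ℕ} (l : Fin n → Fin n → ℕ) : Prop :=
  ∃ ρ : Equiv.Perm (Fin n), ∀ i : Fin n,
    ((i : ℤ) + ((Finset.univ.filter fun j => i < j ∧ Odd (l i j)).card : ℤ)
      - ((Finset.univ.filter fun j => j < i ∧ Odd (l i j)).card : ℤ)) = (ρ i : ℤ)

/-!
If two crossings of `p, q` enclose a stretch in which every other wire crosses `p` and `q`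
equally often (a balanced window), exchanging the labels `p, q` throughout the stretch gives a
tangle realizing the same list with the entry at `p, q` lowered by two. So in a minimal list a
pair with a balanced window crosses at most twice. Between two crossings of `p, q` every other
wire crosses `p` and `q` with the same parity, so an unbalanced window contains a window of some
pair strictly inside it, and descending we reach a balanced one. Hence if `l a b ≥ 3`, between
any two crossings of `a, b` lie all crossings of some other pair; distinct gaps between
consecutive crossings of `a, b` get distinct pairs, and `l a b ≤ C(n,2) + 1`.
-/

theorem Finset.card_filter_eq_of_subset {α : Type*} [DecidableEq α] {I R : Finset α}
    {P Q : α → Prop} [DecidablePred P] [DecidablePred Q] (hIR : I ⊆ R)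
    (hI : #{x ∈ I | P x} = #{x ∈ I | Q x}) (hout : ∀ x ∈ R, x ∉ I → (P x ↔ Q x)) :
    #{x ∈ R | P x} = #{x ∈ R | Q x} := by
  have hsplit : ∀ (S : α → Prop) [DecidablePred S],
      #{x ∈ R | S x} = #{x ∈ I | S x} + #{x ∈ R \ I | S x} := by
    intro S _
    rw [← card_union_of_disjoint (disjoint_sdiff.mono (filter_subset _ _) (filter_subset _ _)),
      ← filter_union, union_sdiff_of_subset hIR]
  rw [hsplit P, hsplit Q, hI,
    filter_congr fun x hx => hout x (mem_sdiff.1 hx).1 (mem_sdiff.1 hx).2]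

theorem Finset.card_le_card_add_one_of_forall_exists_subset_Ioo {ι : Type*} (S : ι → Finset ℕ)
    (C : Finset ℕ) (Z : Finset ι)
    (hgap : ∀ c ∈ C, ∀ c' ∈ C, c < c' → ∃ z ∈ Z, (S z).Nonempty ∧ S z ⊆ Ioo c c') :
    #C ≤ #Z + 1 := by
  classical
  induction C using Finset.induction_on_max generalizing Z with
  | empty => simp
  | insert c C hlt ih =>
    rcases C.eq_empty_or_nonempty with rfl | hne
    · simp
    obtain ⟨z, hz, ⟨x, hx⟩, hsub⟩ := hgap (C.max' hne) (mem_insert_of_mem (C.max'_mem hne)) c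
      (mem_insert_self c C) (hlt _ (C.max'_mem hne))
    have hC := ih (Z.erase z) fun d hd d' hd' hdd' => by
      obtain ⟨y, hy, hyne, hysub⟩ :=
        hgap d (mem_insert_of_mem hd) d' (mem_insert_of_mem hd') hdd'
      refine ⟨y, mem_erase.2 ⟨?_, hy⟩, hyne, hysub⟩
      rintro rfl
      have h₁ := mem_Ioo.1 (hysub hx)
      have h₂ := mem_Ioo.1 (hsub hx)
      have := C.le_max' d' hd'
      omega
    rw [card_insert_of_notMem fun hc => (hlt c hc).false]
    have := card_erase_add_one hz
    omega

namespace Tangle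

variable {n : ℕ}

abbrev IsExchange (π ρ : Equiv.Perm (Fin n)) (i j : Fin n) : Prop :=
  π i = ρ j ∧ π j = ρ i

section Exchange

variable {π ρ : Equiv.Perm (Fin n)} {i j p q d : Fin n}

theorem IsExchange.symm (h : IsExchange π ρ i j) : IsExchange π ρ j i := ⟨h.2, h.1⟩

theorem isExchange_comm : IsExchange π ρ i j ↔ IsExchange π ρ j i := ⟨.symm, .symm⟩

theorem isExchange_flip : IsExchange π ρ i j ↔ IsExchange ρ π i j :=
  ⟨fun h => ⟨h.2.symm, h.1.symm⟩, fun h => ⟨h.2.symm, h.1.symm⟩⟩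

theorem _root_.Adjacent.symm (h : Adjacent π ρ) : Adjacent ρ π := fun x => by
  have := h x
  omega

theorem isExchange_iff_lt_iff_not_lt (hadj : Adjacent π ρ) (hij : i ≠ j) :
    IsExchange π ρ i j ↔ ((π i < π j) ↔ ¬ρ i < ρ j) := by
  have hi := hadj i
  have hj := hadj j
  have hπ : (π i : ℕ) ≠ π j := fun e => hij (π.injective (Fin.ext e))
  have hρ : (ρ i : ℕ) ≠ ρ j := fun e => hij (ρ.injective (Fin.ext e))
  simp only [IsExchange, Fin.lt_def, Fin.ext_iff]
  omega

theorem IsExchange.val_adjacent (hadj : Adjacent π ρ) (hpq : p ≠ q)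
    (hx : IsExchange π ρ p q) : (π p : ℕ) = π q + 1 ∨ (π q : ℕ) = π p + 1 := by
  have hp := hadj p
  have hq := hadj q
  have hπ : (π p : ℕ) ≠ π q := fun e => hpq (π.injective (Fin.ext e))
  have h1 : (π p : ℕ) = ρ q := congrArg Fin.val hx.1
  have h2 : (π q : ℕ) = ρ p := congrArg Fin.val hx.2
  omega

theorem lt_iff_lt_of_val_adjacent (hdp : d ≠ p) (hdq : d ≠ q)
    (hpq : (π p : ℕ) = π q + 1 ∨ (π q : ℕ) = π p + 1) : π d < π p ↔ π d < π q := by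
  have hp : (π d : ℕ) ≠ π p := fun e => hdp (π.injective (Fin.ext e))
  have hq : (π d : ℕ) ≠ π q := fun e => hdq (π.injective (Fin.ext e))
  simp only [Fin.lt_def]
  omega

end Exchange

def crossings (T : ℕ → Equiv.Perm (Fin n)) (i j : Fin n) (A : Finset ℕ) : Finset ℕ :=
  {t ∈ A | IsExchange (T t) (T (t + 1)) i j}

def IsWindow (T : ℕ → Equiv.Perm (Fin n)) (p q : Fin n) (s s' : ℕ) : Prop :=
  s < s' ∧ IsExchange (T s) (T (s + 1)) p q ∧ IsExchange (T s') (T (s' + 1)) p q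

def Balanced (T : ℕ → Equiv.Perm (Fin n)) (p q : Fin n) (A : Finset ℕ) : Prop :=
  ∀ d, d ≠ p → d ≠ q → #(crossings T p d A) = #(crossings T q d A)

section Crossings

variable {T : ℕ → Equiv.Perm (Fin n)} {h : ℕ} {i j p q d : Fin n} {s s' : ℕ}

theorem swapCount_eq_card_crossings (T : ℕ → Equiv.Perm (Fin n)) (h : ℕ) (i j : Fin n) :
    SwapCount T h i j = #(crossings T i j (range (h - 1))) := rfl

theorem crossings_comm (T : ℕ → Equiv.Perm (Fin n)) (i j : Fin n) (A : Finset ℕ) :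
    crossings T i j A = crossings T j i A :=
  filter_congr fun _ _ => isExchange_comm

theorem even_card_crossings_Ico_iff (ht : IsTangle T h) (hij : i ≠ j) {u v : ℕ} (huv : u ≤ v)
    (hv : v < h) :
    Even #(crossings T i j (Ico u v)) ↔ ((T u i < T u j) ↔ (T v i < T v j)) := by
  induction v, huv using Nat.le_induction with
  | base => simp [crossings]
  | succ v huv ih =>
    have hflip := isExchange_iff_lt_iff_not_lt (ht.2 v hv) hij
    rw [crossings, Nat.Ico_succ_right_eq_insert_Ico huv, filter_insert, ← crossings]
    have hv' : v ∉ crossings T i j (Ico u v) := by simp [crossings]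
    split_ifs with hx
    · rw [card_insert_of_notMem hv', Nat.even_add_one, ih (by omega)]
      tauto
    · rw [ih (by omega)]
      tauto

theorem card_crossings_Ioo_mod_two_eq (ht : IsTangle T h) (hpq : p ≠ q) (hdp : d ≠ p)
    (hdq : d ≠ q) (hw : IsWindow T p q s s') (hs' : s' + 1 < h) :
    #(crossings T p d (Ioo s s')) % 2 = #(crossings T q d (Ioo s s')) % 2 := by
  obtain ⟨hss, hXs, hXs'⟩ := hw
  -- `p` and `q` are neighbours right after the first crossing and right before the second,
  -- so every other wire sits on the same side of both at these two times.
  have hside₁ := lt_iff_lt_of_val_adjacent hdp hdq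
    ((isExchange_flip.1 hXs).val_adjacent (Adjacent.symm (ht.2 s (by omega))) hpq)
  have hside₂ := lt_iff_lt_of_val_adjacent hdp hdq (hXs'.val_adjacent (ht.2 s' hs') hpq)
  have hP := even_card_crossings_Ico_iff ht hdp (show s + 1 ≤ s' by omega) (by omega)
  have hQ := even_card_crossings_Ico_iff ht hdq (show s + 1 ≤ s' by omega) (by omega)
  rw [Ico_add_one_left_eq_Ioo, crossings_comm] at hP hQ
  rw [Nat.even_iff] at hP hQ
  omega

end Crossings

section Descent

variable {T : ℕ → Equiv.Perm (Fin n)} {h : ℕ} {p q : Fin n} {s s' : ℕ}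

theorem exists_window_of_two_le_card_crossings {w d : Fin n} {A : Finset ℕ}
    (hA : 2 ≤ #(crossings T w d A)) :
    ∃ t₁ ∈ A, ∃ t₂ ∈ A, IsWindow T w d t₁ t₂ := by
  obtain ⟨t₁, ht₁, t₂, ht₂, hne⟩ := one_lt_card.1 hA
  simp only [crossings, mem_filter] at ht₁ ht₂
  rcases lt_or_gt_of_ne hne with hlt | hlt
  · exact ⟨t₁, ht₁.1, t₂, ht₂.1, hlt, ht₁.2, ht₂.2⟩
  · exact ⟨t₂, ht₂.1, t₁, ht₁.1, hlt, ht₂.2, ht₁.2⟩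

/-- A wire crossing `p` and `q` unequally often, but with equal parity, crosses one of them
twice. -/
theorem exists_window_of_not_balanced (ht : IsTangle T h) (hpq : p ≠ q)
    (hw : IsWindow T p q s s') (hs' : s' + 1 < h) (hnb : ¬Balanced T p q (Ioo s s')) :
    ∃ w d t₁ t₂, w ≠ d ∧ s < t₁ ∧ t₂ < s' ∧ IsWindow T w d t₁ t₂ := by
  simp only [Balanced, not_forall] at hnb
  obtain ⟨d, hdp, hdq, hne⟩ := hnb
  have hpar := card_crossings_Ioo_mod_two_eq ht hpq hdp hdq hw hs'
  obtain ⟨w, hwd, hw2⟩ : ∃ w, w ≠ d ∧ 2 ≤ #(crossings T w d (Ioo s s')) := by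
    rcases lt_or_gt_of_ne hne with hlt | hlt
    · exact ⟨q, Ne.symm hdq, by omega⟩
    · exact ⟨p, Ne.symm hdp, by omega⟩
  obtain ⟨t₁, ht₁, t₂, ht₂, hw'⟩ := exists_window_of_two_le_card_crossings hw2
  rw [mem_Ioo] at ht₁ ht₂
  exact ⟨w, d, t₁, t₂, hwd, ht₁.1, ht₂.2, hw'⟩

theorem exists_balanced_window (ht : IsTangle T h) (hpq : p ≠ q) (hw : IsWindow T p q s s')
    (hs' : s' + 1 < h) :
    ∃ u v t₁ t₂, u ≠ v ∧ s ≤ t₁ ∧ t₂ ≤ s' ∧ IsWindow T u v t₁ t₂ ∧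
      Balanced T u v (Ioo t₁ t₂) := by
  induction hN : s' - s using Nat.strong_induction_on generalizing p q s s' with
  | _ N ih =>
    by_cases hb : Balanced T p q (Ioo s s')
    · exact ⟨p, q, s, s', hpq, le_rfl, le_rfl, hw, hb⟩
    obtain ⟨w, d, t₁, t₂, hwd, h₁, h₂, hw'⟩ := exists_window_of_not_balanced ht hpq hw hs' hb
    obtain ⟨u, v, r₁, r₂, huv, hr₁, hr₂, hwin, hbal⟩ :=
      ih (t₂ - t₁) (by have := hw'.1; omega) hwd hw' (by omega) rfl
    exact ⟨u, v, r₁, r₂, huv, by omega, by omega, hwin, hbal⟩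

end Descent

section Reflection

open Equiv

variable {π ρ : Perm (Fin n)} {i j p q : Fin n}

theorem _root_.Adjacent.mul_right (h : Adjacent π ρ) (σ : Perm (Fin n)) :
    Adjacent (π * σ) (ρ * σ) :=
  fun x => h (σ x)

theorem _root_.Adjacent.mul_swap_of_isExchange (h : Adjacent π ρ) (hx : IsExchange π ρ p q) :
    Adjacent π (ρ * swap p q) := by
  intro x
  rcases eq_or_ne x p with rfl | hxp
  · simp [hx.1]
  rcases eq_or_ne x q with rfl | hxq
  · simp [hx.2]
  simpa [swap_apply_of_ne_of_ne hxp hxq] using h x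

theorem isExchange_mul_right (σ : Perm (Fin n)) :
    IsExchange (π * σ) (ρ * σ) i j ↔ IsExchange π ρ (σ i) (σ j) := Iff.rfl

theorem IsExchange.isExchange_mul_swap_iff (hx : IsExchange π ρ p q) (hij : i ≠ j) :
    IsExchange π (ρ * swap p q) i j ↔ IsExchange π ρ i j ∧ s(i, j) ≠ s(p, q) := by
  have hπ : ∀ a b, π a = π b ↔ a = b := fun _ _ => π.injective.eq_iff
  have hρ : ∀ a b, ρ a = ρ b ↔ a = b := fun _ _ => ρ.injective.eq_iff
  obtain ⟨h1, h2⟩ := hx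
  simp only [IsExchange, Perm.mul_apply, swap_apply_def, Sym2.eq_iff, ne_eq]
  grind

def reflect (T : ℕ → Perm (Fin n)) (p q : Fin n) (s s' : ℕ) : ℕ → Perm (Fin n) :=
  fun t => if s < t ∧ t ≤ s' then T t * swap p q else T t

variable {T : ℕ → Perm (Fin n)} {h s s' t : ℕ}

theorem reflect_of_le (ht : t ≤ s) : reflect T p q s s' t = T t := by
  simp [reflect, show ¬s < t by omega]

theorem reflect_of_mem_Ioc (h₁ : s < t) (h₂ : t ≤ s') :
    reflect T p q s s' t = T t * swap p q := by
  simp [reflect, h₁, h₂]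

theorem reflect_of_lt (ht : s' < t) : reflect T p q s s' t = T t := by
  simp [reflect, show ¬t ≤ s' by omega]

theorem isTangle_reflect (ht : IsTangle T h) (hw : IsWindow T p q s s') :
    IsTangle (reflect T p q s s') h := by
  obtain ⟨hss, hXs, hXs'⟩ := hw
  refine ⟨ht.1, fun t htl => ?_⟩
  have hadj : Adjacent (T t) (T (t + 1)) := ht.2 t htl
  rcases lt_trichotomy t s with hts | rfl | hts
  · rwa [reflect_of_le hts.le, reflect_of_le hts]
  · rw [reflect_of_le le_rfl, reflect_of_mem_Ioc (by omega) hss]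
    exact hadj.mul_swap_of_isExchange hXs
  rcases lt_trichotomy t s' with hts' | rfl | hts'
  · rw [reflect_of_mem_Ioc hts hts'.le, reflect_of_mem_Ioc (by omega) hts']
    exact hadj.mul_right _
  · rw [reflect_of_mem_Ioc hts le_rfl, reflect_of_lt (by omega)]
    exact (hadj.symm.mul_swap_of_isExchange (isExchange_flip.1 hXs')).symm
  · rwa [reflect_of_lt hts', reflect_of_lt (by omega)]

theorem isExchange_reflect_of_mem_Ioo (ht : t ∈ Ioo s s') :
    IsExchange (reflect T p q s s' t) (reflect T p q s s' (t + 1)) i j ↔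
      IsExchange (T t) (T (t + 1)) (swap p q i) (swap p q j) := by
  rw [mem_Ioo] at ht
  rw [reflect_of_mem_Ioc ht.1 ht.2.le, reflect_of_mem_Ioc (by omega) ht.2, isExchange_mul_right]

theorem isExchange_reflect_of_notMem_Ioo (hw : IsWindow T p q s s') (hij : i ≠ j)
    (ht : t ∉ Ioo s s') :
    IsExchange (reflect T p q s s' t) (reflect T p q s s' (t + 1)) i j ↔
      IsExchange (T t) (T (t + 1)) i j ∧ ¬((t = s ∨ t = s') ∧ s(i, j) = s(p, q)) := by
  obtain ⟨hss, hXs, hXs'⟩ := hw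
  rw [mem_Ioo] at ht
  rcases lt_trichotomy t s with hts | rfl | hts
  · rw [reflect_of_le hts.le, reflect_of_le hts]
    simp [hts.ne, (hts.trans hss).ne]
  · rw [reflect_of_le le_rfl, reflect_of_mem_Ioc (by omega) hss,
      hXs.isExchange_mul_swap_iff hij]
    simp
  obtain rfl | hts' : t = s' ∨ s' < t := by omega
  · rw [reflect_of_mem_Ioc hts le_rfl, reflect_of_lt (by omega), isExchange_flip,
      (isExchange_flip.1 hXs').isExchange_mul_swap_iff hij, isExchange_flip]
    simp
  · rw [reflect_of_lt hts', reflect_of_lt (by omega)]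
    simp [hts'.ne', (hss.trans hts').ne']

theorem Balanced.card_crossings_swap {A : Finset ℕ} (hb : Balanced T p q A) (hij : i ≠ j) :
    #(crossings T (swap p q i) (swap p q j) A) = #(crossings T i j A) := by
  have key : ∀ {x y}, y ≠ p → y ≠ q →
      #(crossings T (swap p q x) y A) = #(crossings T x y A) := by
    intro x y hyp hyq
    rcases eq_or_ne x p with rfl | hxp
    · rw [swap_apply_left, hb y hyp hyq]
    rcases eq_or_ne x q with rfl | hxq
    · rw [swap_apply_right, hb y hyp hyq]
    · rw [swap_apply_of_ne_of_ne hxp hxq]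
  by_cases hi : i = p ∨ i = q <;> by_cases hj : j = p ∨ j = q
  · rcases hi with rfl | rfl <;> rcases hj with rfl | rfl
    · exact absurd rfl hij
    · rw [swap_apply_left, swap_apply_right, crossings_comm]
    · rw [swap_apply_right, swap_apply_left, crossings_comm]
    · exact absurd rfl hij
  · rw [not_or] at hj
    rw [swap_apply_of_ne_of_ne hj.1 hj.2, key hj.1 hj.2]
  · rw [not_or] at hi
    rw [swap_apply_of_ne_of_ne hi.1 hi.2, crossings_comm, crossings_comm T i j,
      key hi.1 hi.2]
  · rw [not_or] at hi hj
    rw [swap_apply_of_ne_of_ne hi.1 hi.2, swap_apply_of_ne_of_ne hj.1 hj.2]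

theorem card_crossings_reflect (hw : IsWindow T p q s s') (hs' : s' + 1 < h)
    (hb : Balanced T p q (Ioo s s')) (hij : i ≠ j) (hne : s(i, j) ≠ s(p, q)) :
    #(crossings (reflect T p q s s') i j (range (h - 1))) =
      #(crossings T i j (range (h - 1))) := by
  refine card_filter_eq_of_subset (I := Ioo s s') (fun t ht => ?_) ?_ fun t _ ht => ?_
  · simp only [mem_Ioo, mem_range] at ht ⊢
    omega
  · exact (congrArg card (filter_congr fun t ht => isExchange_reflect_of_mem_Ioo ht)).trans
      (hb.card_crossings_swap hij)
  · rw [isExchange_reflect_of_notMem_Ioo hw hij ht]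
    simp [hne]

theorem card_crossings_reflect_self (hw : IsWindow T p q s s') (hpq : p ≠ q) (hs' : s' + 1 < h) :
    #(crossings (reflect T p q s s') p q (range (h - 1))) + 2 =
      #(crossings T p q (range (h - 1))) := by
  have hss := hw.1
  have hsub : {s, s'} ⊆ crossings T p q (range (h - 1)) := by
    simp only [insert_subset_iff, singleton_subset_iff, crossings, mem_filter, mem_range]
    exact ⟨⟨by omega, hw.2.1⟩, ⟨by omega, hw.2.2⟩⟩
  have hset : crossings (reflect T p q s s') p q (range (h - 1)) =
      crossings T p q (range (h - 1)) \ {s, s'} := by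
    ext t
    simp only [crossings, mem_sdiff, mem_filter, mem_insert, mem_singleton]
    by_cases ht : t ∈ Ioo s s'
    · rw [isExchange_reflect_of_mem_Ioo ht, swap_apply_left, swap_apply_right, isExchange_comm]
      rw [mem_Ioo] at ht
      have : t ≠ s ∧ t ≠ s' := ⟨by omega, by omega⟩
      tauto
    · rw [isExchange_reflect_of_notMem_Ioo hw hpq ht]
      tauto
  rw [hset, card_sdiff_of_subset hsub, card_pair hss.ne]
  have := card_le_card hsub
  rw [card_pair hss.ne] at this
  omega

def reduce (l : Fin n → Fin n → ℕ) (p q : Fin n) : Fin n → Fin n → ℕ :=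
  fun i j => if s(i, j) = s(p, q) then l i j - 2 else l i j

theorem realizes_reflect {l : Fin n → Fin n → ℕ} (hreal : Realizes T h l) (hpq : p ≠ q)
    (hw : IsWindow T p q s s') (hs' : s' + 1 < h) (hb : Balanced T p q (Ioo s s')) :
    Realizes (reflect T p q s s') h (reduce l p q) := by
  obtain ⟨ht, h0, hcnt⟩ := hreal
  refine ⟨isTangle_reflect ht hw, by rw [reflect_of_le (Nat.zero_le s), h0], fun i j hij => ?_⟩
  rw [reduce, swapCount_eq_card_crossings, ← hcnt i j hij, swapCount_eq_card_crossings]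
  split_ifs with hpair
  · have := card_crossings_reflect_self hw hpq hs'
    rcases Sym2.eq_iff.1 hpair with ⟨rfl, rfl⟩ | ⟨rfl, rfl⟩
    · omega
    · rw [crossings_comm _ i j, crossings_comm T i j]
      omega
  · exact card_crossings_reflect hw hs' hb hij hpair

end Reflection

section Minimal

/-- No feasible list other than `l` reaches `l` by raising positive entries in steps of two. -/
def IsMinimal (l : Fin n → Fin n → ℕ) : Prop :=
  ∀ l' : Fin n → Fin n → ℕ, Feasible l' → (∀ i j, l' i j ≤ l i j) →
    (∀ i j, l' i j % 2 = l i j % 2) → (∀ i j, 0 < l i j → 0 < l' i j) → l' = l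

variable {T : ℕ → Equiv.Perm (Fin n)} {h s s' : ℕ} {l : Fin n → Fin n → ℕ} {p q a b : Fin n}

theorem IsMinimal.le_two_of_balanced (hmin : IsMinimal l) (hsym : ∀ i j, l i j = l j i)
    (hreal : Realizes T h l) (hpq : p ≠ q) (hw : IsWindow T p q s s') (hs' : s' + 1 < h)
    (hb : Balanced T p q (Ioo s s')) : l p q ≤ 2 := by
  by_contra! hl
  have hred : ∀ i j, (reduce l p q i j + 2 = l i j ∧ 3 ≤ l i j) ∨ reduce l p q i j = l i j := by
    intro i j
    unfold reduce
    split_ifs with hij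
    · have : 3 ≤ l i j := by
        rcases Sym2.eq_iff.1 hij with ⟨rfl, rfl⟩ | ⟨rfl, rfl⟩
        · exact hl
        · rwa [hsym]
      omega
    · exact .inr rfl
  have heq := hmin (reduce l p q) ⟨h, _, realizes_reflect hreal hpq hw hs' hb⟩
    (fun i j => by have := hred i j; omega) (fun i j => by have := hred i j; omega)
    (fun i j => by have := hred i j; omega)
  have := congrFun (congrFun heq p) q
  simp only [reduce, if_true] at this
  omega

theorem IsMinimal.exists_crossings_subset_Ioo (hmin : IsMinimal l) (hsym : ∀ i j, l i j = l j i)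
    (hreal : Realizes T h l) (hab : a ≠ b) (hl : 3 ≤ l a b) (hw : IsWindow T a b s s')
    (hs' : s' + 1 < h) :
    ∃ u v, u ≠ v ∧ (crossings T u v (range (h - 1))).Nonempty ∧
      crossings T u v (range (h - 1)) ⊆ Ioo s s' := by
  have hnb : ¬Balanced T a b (Ioo s s') := fun hb =>
    absurd (hmin.le_two_of_balanced hsym hreal hab hw hs' hb) (by omega)
  obtain ⟨w, d, t₁, t₂, hwd, h₁, h₂, hw'⟩ :=
    exists_window_of_not_balanced hreal.1 hab hw hs' hnb
  obtain ⟨u, v, r₁, r₂, huv, hr₁, hr₂, hwin, hbal⟩ :=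
    exists_balanced_window hreal.1 hwd hw' (by omega)
  have hle := hmin.le_two_of_balanced hsym hreal huv hwin (by omega) hbal
  have hr := hwin.1
  have hsub : {r₁, r₂} ⊆ crossings T u v (range (h - 1)) := by
    simp only [insert_subset_iff, singleton_subset_iff, crossings, mem_filter, mem_range]
    exact ⟨⟨by omega, hwin.2.1⟩, ⟨by omega, hwin.2.2⟩⟩
  have hcard : #(crossings T u v (range (h - 1))) ≤ #{r₁, r₂} := by
    rw [← swapCount_eq_card_crossings, hreal.2.2 u v huv, card_pair hwin.1.ne]
    exact hle
  refine ⟨u, v, huv, ?_⟩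
  rw [← eq_of_subset_of_card_le hsub hcard]
  refine ⟨insert_nonempty _ _, ?_⟩
  simp only [insert_subset_iff, singleton_subset_iff, mem_Ioo]
  omega

end Minimal

end Tangle

open Tangle

/-- Entries of a minimal feasible list are at most C(n,2) + 1. -/
theorem minimal_feasible_upper_bound_choose (n : ℕ) (l : Fin n → Fin n → ℕ)
    (hsym : ∀ i j, l i j = l j i) (hdiag : ∀ i, l i i = 0)
    (hfeas : Feasible l)
    (hmin : ∀ l' : Fin n → Fin n → ℕ, Feasible l' →
      (∀ i j, l' i j ≤ l i j) →
      (∀ i j, l' i j % 2 = l i j % 2) →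
      (∀ i j, 0 < l i j → 0 < l' i j) →
      l' = l) :
    ∀ i j : Fin n, l i j ≤ n.choose 2 + 1 := by
  intro a b
  obtain ⟨h, T, hreal⟩ := hfeas
  rcases eq_or_ne a b with rfl | hab
  · simp [hdiag]
  by_cases hl : l a b ≤ 2
  · have hn : 1 < n := by simpa using Fintype.one_lt_card_iff.2 ⟨a, b, hab⟩
    have := Nat.choose_pos (k := 2) hn
    omega
  have hpairs : #{z : Sym2 (Fin n) | ¬z.IsDiag} = n.choose 2 := by
    rw [← Fintype.card_subtype, Sym2.card_subtype_not_diag, Fintype.card_fin]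
  rw [← hreal.2.2 a b hab, swapCount_eq_card_crossings, ← hpairs]
  refine card_le_card_add_one_of_forall_exists_subset_Ioo
    (Sym2.lift ⟨fun i j => crossings T i j (range (h - 1)), fun i j => crossings_comm T i j _⟩)
    _ _ fun c hc c' hc' hcc' => ?_
  simp only [crossings, mem_filter, mem_range] at hc hc'
  obtain ⟨u, v, huv, hne, hsub⟩ := IsMinimal.exists_crossings_subset_Ioo hmin hsym hreal hab
    (by omega) ⟨hcc', hc.2, hc'.2⟩ (by omega)
  exact ⟨s(u, v), by simpa using huv, hne, hsub⟩
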